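/- arXiv:1409.3649 — 2 statements merged into one kernel-verified Lean document; each statement's English description precedes it below -/
import Mathlib

section
/- Let (X, 𝓕, m) be a probability space and T an m-nonsingular transformation with Perron–Frobenius operator 𝓛_T. Let f, g ∈ L¹(m) be nonnegative and suppose ‖(𝓛_T)ⁿ f − g‖_{L¹(m)} → 0 as n → ∞. Then m({f > 0} \ ⋃_{n=0}^{∞} T⁻ⁿ{g > 0}) = 0. -/
/-!
Let `B = ⋃ₙ T⁻ⁿ{g > 0}`. Since `T⁻¹ B ⊆ B`, the complement `Bᶜ` satisfies `Bᶜ ⊆ T⁻¹ Bᶜ`, so by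
the defining identity of the Perron–Frobenius operator and positivity the mass
`∫_{Bᶜ} 𝓛ⁿ f` is nondecreasing in `n`. As `g` vanishes on `Bᶜ`, this mass is bounded by
`‖𝓛ⁿ f − g‖₁ → 0`, hence `∫_{Bᶜ} f = 0` and `f = 0` a.e. on `Bᶜ`.
-/

open MeasureTheory Filter Topology

noncomputable section

/-- `L` is the Perron–Frobenius operator of the `μ`-nonsingular transformation `T`:
for every integrable `f`, `L f` is integrable and `∫_A L f dμ = ∫_{T⁻¹ A} f dμ`
for every measurable set `A`. -/
def IsPF {α : Type*} [MeasurableSpace α] (μ : Measure α) (T : α → α)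
    (L : (α → ℝ) → α → ℝ) : Prop :=
  ∀ f : α → ℝ, Integrable f μ →
    Integrable (L f) μ ∧
      ∀ A : Set α, MeasurableSet A → ∫ x in A, L f x ∂μ = ∫ x in T ⁻¹' A, f x ∂μ

/-- Asymptotic periodicity of an operator `L` on `L¹(μ)` with data `s`, `r i`,
probability densities `g i j` and bounded linear functionals `Λ i j`. -/
def AsympPeriodic {α : Type*} [MeasurableSpace α] (μ : Measure α)
    (L : (α → ℝ) → α → ℝ) (s : ℕ) (r : ℕ → ℕ) (g : ℕ → ℕ → α → ℝ)
    (Λ : ℕ → ℕ → (α →₁[μ] ℝ) →L[ℝ] ℝ) : Prop :=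
  1 ≤ s ∧ (∀ i ∈ Finset.Icc 1 s, 1 ≤ r i) ∧
    (∀ i ∈ Finset.Icc 1 s, ∀ j ∈ Finset.Icc 1 (r i),
      Measurable (g i j) ∧ Integrable (g i j) μ ∧ 0 ≤ᵐ[μ] g i j ∧ ∫ x, g i j x ∂μ = 1) ∧
    (∀ i ∈ Finset.Icc 1 s, ∀ j ∈ Finset.Icc 1 (r i), ∀ k ∈ Finset.Icc 1 s,
      ∀ l ∈ Finset.Icc 1 (r k), (i, j) ≠ (k, l) →
        (fun x => g i j x * g k l x) =ᵐ[μ] 0) ∧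
    (∀ i ∈ Finset.Icc 1 s,
      (∀ j ∈ Finset.Icc 1 (r i - 1), L (g i j) =ᵐ[μ] g i (j + 1)) ∧
        L (g i (r i)) =ᵐ[μ] g i 1) ∧
    ∀ (f : α → ℝ) (hf : Integrable f μ),
      Tendsto (fun n => ∫ x, |(L^[n] (fun x => f x -
          ∑ i ∈ Finset.Icc 1 s, ∑ j ∈ Finset.Icc 1 (r i), Λ i j (hf.toL1 f) * g i j x)) x| ∂μ)
        atTop (𝓝 0)

/-- The averaged density `(1/r) ∑_{j=1}^{r} g j`. -/
def avgDens {α : Type*} (r : ℕ) (g : ℕ → α → ℝ) : α → ℝ :=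
  fun x => (r : ℝ)⁻¹ * ∑ j ∈ Finset.Icc 1 r, g j x

theorem compl_iUnion_preimage_iterate_subset {X : Type*} (T : X → X) (S : Set X) :
    (⋃ n : ℕ, T^[n] ⁻¹' S)ᶜ ⊆ T ⁻¹' (⋃ n : ℕ, T^[n] ⁻¹' S)ᶜ := by
  intro x hx hTx
  obtain ⟨n, hn⟩ := Set.mem_iUnion.mp hTx
  exact hx (Set.mem_iUnion.mpr ⟨n + 1, by rwa [Set.mem_preimage, Function.iterate_succ_apply]⟩)

theorem setIntegral_le_integral_abs_sub_of_eqOn_zero {X : Type*} [MeasurableSpace X]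
    {μ : Measure X} {h g : X → ℝ} {s : Set X} (hh : Integrable h μ) (hg : Integrable g μ)
    (hgs : ∀ x ∈ s, g x = 0) :
    ∫ x in s, h x ∂μ ≤ ∫ x, |h x - g x| ∂μ := by
  have hsub : Integrable (fun x => h x - g x) μ := hh.sub hg
  calc ∫ x in s, h x ∂μ = ∫ x in s, (h x - g x) ∂μ := by
        rw [integral_sub hh.integrableOn hg.integrableOn,
          setIntegral_eq_zero_of_forall_eq_zero hgs, sub_zero]
    _ ≤ ∫ x in s, |h x - g x| ∂μ :=
        setIntegral_mono hsub.integrableOn hsub.abs.integrableOn fun x => le_abs_self _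
    _ ≤ ∫ x, |h x - g x| ∂μ :=
        setIntegral_le_integral hsub.abs (Eventually.of_forall fun x => abs_nonneg _)

namespace IsPF

variable {X : Type*} [MeasurableSpace X] {μ : Measure X} {T : X → X} {L : (X → ℝ) → X → ℝ}

theorem ae_nonneg (hL : IsPF μ T L) {f : X → ℝ} (hf : Integrable f μ) (hf0 : 0 ≤ᵐ[μ] f) :
    0 ≤ᵐ[μ] L f :=
  ae_nonneg_of_forall_setIntegral_nonneg (hL f hf).1 fun A hA _ => by
    rw [(hL f hf).2 A hA]
    exact setIntegral_nonneg_of_ae hf0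

theorem integrable_iterate (hL : IsPF μ T L) {f : X → ℝ} (hf : Integrable f μ) (n : ℕ) :
    Integrable (L^[n] f) μ := by
  induction n with
  | zero => exact hf
  | succ n ih => rw [Function.iterate_succ_apply']; exact (hL _ ih).1

theorem ae_nonneg_iterate (hL : IsPF μ T L) {f : X → ℝ} (hf : Integrable f μ)
    (hf0 : 0 ≤ᵐ[μ] f) (n : ℕ) : 0 ≤ᵐ[μ] L^[n] f := by
  induction n with
  | zero => exact hf0
  | succ n ih =>
    rw [Function.iterate_succ_apply']
    exact hL.ae_nonneg (hL.integrable_iterate hf n) ih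

theorem setIntegral_le_setIntegral_apply (hL : IsPF μ T L) {f : X → ℝ} (hf : Integrable f μ)
    (hf0 : 0 ≤ᵐ[μ] f) {C : Set X} (hC : MeasurableSet C) (hCT : C ⊆ T ⁻¹' C) :
    ∫ x in C, f x ∂μ ≤ ∫ x in C, L f x ∂μ := by
  rw [(hL f hf).2 C hC]
  exact setIntegral_mono_set hf.integrableOn (ae_restrict_of_ae hf0) hCT.eventuallyLE

theorem setIntegral_le_setIntegral_iterate (hL : IsPF μ T L) {f : X → ℝ} (hf : Integrable f μ)
    (hf0 : 0 ≤ᵐ[μ] f) {C : Set X} (hC : MeasurableSet C) (hCT : C ⊆ T ⁻¹' C) (n : ℕ) :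
    ∫ x in C, f x ∂μ ≤ ∫ x in C, (L^[n] f) x ∂μ := by
  induction n with
  | zero => exact le_rfl
  | succ n ih =>
    rw [Function.iterate_succ_apply']
    exact ih.trans (hL.setIntegral_le_setIntegral_apply (hL.integrable_iterate hf n)
      (hL.ae_nonneg_iterate hf hf0 n) hC hCT)

end IsPF

theorem measure_inter_setOf_pos_eq_zero_of_setIntegral_eq_zero {X : Type*}
    [MeasurableSpace X] {μ : Measure X} {f : X → ℝ} {s : Set X} (hs : MeasurableSet s)
    (hf : IntegrableOn f s μ) (hf0 : 0 ≤ f) (hfs : ∫ x in s, f x ∂μ = 0) :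
    μ ({x | 0 < f x} ∩ s) = 0 := by
  rw [← Measure.restrict_apply' hs]
  have hf_ae : f =ᵐ[μ.restrict s] 0 := (integral_eq_zero_iff_of_nonneg hf0 hf).mp hfs
  exact measure_mono_null (fun x (hx : 0 < f x) (hfx : f x = 0) => hx.ne' hfx) hf_ae

theorem stmt_10_general {X : Type*} [MeasurableSpace X] (m : Measure X)
    (T : X → X) (hT : Measurable T)
    (L : (X → ℝ) → X → ℝ) (hL : IsPF m T L)
    (f g : X → ℝ) (hgm : Measurable g)
    (hfi : Integrable f m) (hgi : Integrable g m)
    (hf0 : 0 ≤ f) (hg0 : 0 ≤ g)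
    (hconv : Tendsto (fun n => ∫ x, |(L^[n] f) x - g x| ∂m) atTop (𝓝 0)) :
    m ({x | 0 < f x} \ ⋃ n : ℕ, T^[n] ⁻¹' {x | 0 < g x}) = 0 := by
  set B : Set X := ⋃ n : ℕ, T^[n] ⁻¹' {x | 0 < g x}
  have hB : MeasurableSet B :=
    MeasurableSet.iUnion fun n => hT.iterate n (measurableSet_lt measurable_const hgm)
  have hg_compl : ∀ x ∈ Bᶜ, g x = 0 := fun x hx =>
    le_antisymm (not_lt.mp fun hgx => hx (Set.mem_iUnion.mpr ⟨0, hgx⟩)) (hg0 x)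
  have hf_le : ∀ n, ∫ x in Bᶜ, f x ∂m ≤ ∫ x, |(L^[n] f) x - g x| ∂m := fun n =>
    (hL.setIntegral_le_setIntegral_iterate hfi (Eventually.of_forall hf0) hB.compl
      (compl_iUnion_preimage_iterate_subset T _) n).trans
      (setIntegral_le_integral_abs_sub_of_eqOn_zero (hL.integrable_iterate hfi n) hgi hg_compl)
  have hf_compl : ∫ x in Bᶜ, f x ∂m = 0 :=
    le_antisymm (ge_of_tendsto' hconv hf_le) (setIntegral_nonneg hB.compl fun x _ => hf0 x)
  rw [Set.sdiff_eq]
  exact measure_inter_setOf_pos_eq_zero_of_setIntegral_eq_zero hB.compl hfi.integrableOn hf0 hf_compl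

/-- **Proposition 2.5.** If `‖𝓛_Tⁿ f − g‖₁ → 0` for nonnegative `f, g ∈ L¹(m)`,
then `m({f > 0} \ ⋃ₙ T⁻ⁿ{g > 0}) = 0`. -/
theorem stmt_10 {X : Type*} [MeasurableSpace X] (m : Measure X) [IsProbabilityMeasure m]
    (T : X → X) (hT : Measurable T)
    (hns : ∀ A : Set X, MeasurableSet A → m A = 0 → m (T ⁻¹' A) = 0)
    (L : (X → ℝ) → X → ℝ) (hL : IsPF m T L)
    (f g : X → ℝ) (hfm : Measurable f) (hgm : Measurable g)
    (hfi : Integrable f m) (hgi : Integrable g m)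
    (hf0 : 0 ≤ f) (hg0 : 0 ≤ g)
    (hconv : Tendsto (fun n => ∫ x, |(L^[n] f) x - g x| ∂m) atTop (𝓝 0)) :
    m ({x | 0 < f x} \ ⋃ n : ℕ, T^[n] ⁻¹' {x | 0 < g x}) = 0 :=
  stmt_10_general m T hT L hL f g hgm hfi hgi hf0 hg0 hconv
end
end

section
/- Let (X, 𝓕, m) be a probability space and T an m-nonsingular transformation with Perron–Frobenius operator 𝓛_T. Let f ∈ L¹(m) be nonnegative with 𝓛_T f = f, and let A ∈ 𝓕 satisfy A ⊆ T⁻¹(A). Then 𝓛_T(f·1_A) = f·1_A in L¹(m). -/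
/-!
Put `g = 1_A f`. Since `f ≥ 0` and `A ⊆ T⁻¹A`, for every measurable `s`
`∫_{T⁻¹s} g = ∫_{T⁻¹s ∩ A} f ≤ ∫_{T⁻¹(s ∩ A)} f = ∫_{s ∩ A} 𝓛f = ∫_s g`,
so `𝓛g ≤ g` almost everywhere. Both sides have the same total integral, hence `𝓛g = g`.
-/

open MeasureTheory Filter Topology

noncomputable section

namespace IsPF

variable {α : Type*} [MeasurableSpace α] {μ : Measure α} {T : α → α}
  {L : (α → ℝ) → α → ℝ} {h : α → ℝ}

theorem integral_eq (hL : IsPF μ T L) (hh : Integrable h μ) :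
    ∫ x, L h x ∂μ = ∫ x, h x ∂μ := by
  simpa using (hL h hh).2 Set.univ MeasurableSet.univ

theorem ae_eq_of_forall_setIntegral_preimage_le (hL : IsPF μ T L) (hh : Integrable h μ)
    (hle : ∀ s, MeasurableSet s → ∫ x in T ⁻¹' s, h x ∂μ ≤ ∫ x in s, h x ∂μ) :
    L h =ᵐ[μ] h := by
  obtain ⟨hLh, hLh_set⟩ := hL h hh
  have hLh_le : L h ≤ᵐ[μ] h :=
    ae_le_of_forall_setIntegral_le hLh hh fun s hs _ => (hLh_set s hs).trans_le (hle s hs)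
  exact (integral_eq_iff_of_ae_le hLh hh hLh_le).mp (hL.integral_eq hh)

theorem setIntegral_preimage_indicator_le (hL : IsPF μ T L) {f : α → ℝ} (hfi : Integrable f μ)
    (hf0 : 0 ≤ f) (hfix : L f =ᵐ[μ] f) {A : Set α} (hA : MeasurableSet A)
    (hAsub : A ⊆ T ⁻¹' A) {s : Set α} (hs : MeasurableSet s) :
    ∫ x in T ⁻¹' s, A.indicator f x ∂μ ≤ ∫ x in s, A.indicator f x ∂μ :=
  calc ∫ x in T ⁻¹' s, A.indicator f x ∂μ = ∫ x in T ⁻¹' s ∩ A, f x ∂μ :=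
        setIntegral_indicator hA
    _ ≤ ∫ x in T ⁻¹' (s ∩ A), f x ∂μ :=
        setIntegral_mono_set hfi.integrableOn (ae_of_all _ hf0)
          (ae_of_all _ fun _ hx => ⟨hx.1, hAsub hx.2⟩)
    _ = ∫ x in s ∩ A, L f x ∂μ := ((hL f hfi).2 _ (hs.inter hA)).symm
    _ = ∫ x in s ∩ A, f x ∂μ := integral_congr_ae (ae_restrict_of_ae hfix)
    _ = ∫ x in s, A.indicator f x ∂μ := (setIntegral_indicator hA).symm

end IsPF

theorem stmt_12_general {X : Type*} [MeasurableSpace X] (m : Measure X)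
    (T : X → X)
    (L : (X → ℝ) → X → ℝ) (hL : IsPF m T L)
    (f : X → ℝ) (hfi : Integrable f m) (hf0 : 0 ≤ f)
    (hfix : L f =ᵐ[m] f)
    (A : Set X) (hA : MeasurableSet A) (hAsub : A ⊆ T ⁻¹' A) :
    L (A.indicator f) =ᵐ[m] A.indicator f :=
  hL.ae_eq_of_forall_setIntegral_preimage_le (hfi.indicator hA) fun _ hs =>
    hL.setIntegral_preimage_indicator_le hfi hf0 hfix hA hAsub hs

/-- **Proposition 2.4.** If `𝓛_T f = f` for a nonnegative `f ∈ L¹(m)` and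
`A ⊆ T⁻¹(A)`, then `𝓛_T (f·1_A) = f·1_A`. -/
theorem stmt_12 {X : Type*} [MeasurableSpace X] (m : Measure X) [IsProbabilityMeasure m]
    (T : X → X) (hT : Measurable T)
    (hns : ∀ A : Set X, MeasurableSet A → m A = 0 → m (T ⁻¹' A) = 0)
    (L : (X → ℝ) → X → ℝ) (hL : IsPF m T L)
    (f : X → ℝ) (hfm : Measurable f) (hfi : Integrable f m) (hf0 : 0 ≤ f)
    (hfix : L f =ᵐ[m] f)
    (A : Set X) (hA : MeasurableSet A) (hAsub : A ⊆ T ⁻¹' A) :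
    L (A.indicator f) =ᵐ[m] A.indicator f :=
  stmt_12_general m T L hL f hfi hf0 hfix A hA hAsub
end
end
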